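/- With the notation of the context: f ∘ g = id_{C'}, and g ∘ f is chain homotopic to id_C via the homotopy h, namely id_C − g∘f = d∘h + h∘d. In particular the complexes (C, d) and (C', d') are chain homotopy equivalent. -/

import Mathlib

open Finsupp

/-- The complement of the two cancelled basis indices. -/
def cancelSet {I : Type*} (k l : I) : Set I := {i | i ≠ k ∧ i ≠ l}

variable {R : Type*} [CommRing R] {C : Type*} [AddCommGroup C] [Module R C]
  {I : Type*}

/-- The inclusion `ι : C' → C` of the free module on the remaining basis vectors. -/
noncomputable def cancelIota (b : Module.Basis I R C) (k l : I) :
    ((cancelSet k l) →₀ R) →ₗ[R] C :=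
  Finsupp.linearCombination R (fun i : cancelSet k l => b i.1)

/-- The projection `π : C → C'` killing `x_k` and `x_l` and fixing the other
basis vectors. -/
noncomputable def cancelPi (b : Module.Basis I R C) (k l : I) :
    C →ₗ[R] ((cancelSet k l) →₀ R) :=
  (Finsupp.lsubtypeDomain (cancelSet k l)) ∘ₗ (b.repr : C →ₗ[R] (I →₀ R))

/-- The map `h : C → C` with `h(x_l) = x_k` and `h(x_i) = 0` for `i ≠ l`. -/
noncomputable def cancelH (b : Module.Basis I R C) (k l : I) : C →ₗ[R] C :=
  (LinearMap.toSpanSingleton R C (b k)) ∘ₗ (b.coord l)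

/-- The reduced differential `d' = π ∘ (d - d∘h∘d) ∘ ι`. -/
noncomputable def cancelD (b : Module.Basis I R C) (k l : I) (d : C →ₗ[R] C) :
    ((cancelSet k l) →₀ R) →ₗ[R] ((cancelSet k l) →₀ R) :=
  (cancelPi b k l) ∘ₗ (d - d ∘ₗ (cancelH b k l) ∘ₗ d) ∘ₗ (cancelIota b k l)

/-- The chain map `f = π ∘ (id - d∘h) : C → C'`. -/
noncomputable def cancelF (b : Module.Basis I R C) (k l : I) (d : C →ₗ[R] C) :
    C →ₗ[R] ((cancelSet k l) →₀ R) :=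
  (cancelPi b k l) ∘ₗ (LinearMap.id - d ∘ₗ (cancelH b k l))

/-- The chain map `g = (id - h∘d) ∘ ι : C' → C`. -/
noncomputable def cancelG (b : Module.Basis I R C) (k l : I) (d : C →ₗ[R] C) :
    ((cancelSet k l) →₀ R) →ₗ[R] C :=
  (LinearMap.id - (cancelH b k l) ∘ₗ d) ∘ₗ (cancelIota b k l)

/-! Write `p_j = x_j ⊗ coord_j` for the projection onto the line of `x_j`. Then `ι ∘ π = 1 - p_k - p_l`,
`π ∘ ι = 1`, and `h ∘ h = h ∘ ι = π ∘ h = 0`; so `f ∘ g` reduces to `π ∘ ι = 1`.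
Since `d(x_k, x_l) = 1`, we have `h d p_k = p_k` and `p_l d h = p_l`, and with `d² = 0` the product
`g ∘ f = (1 - hd)(1 - p_k - p_l)(1 - dh)` in `End C` collapses to `1 - (dh + hd)`. -/

theorem one_sub_mul_one_sub_sub_mul_one_sub {A : Type*} [Ring A] {d h pk pl : A}
    (hd : d * d = 0) (hk : h * d * pk = pk) (hl : pl * d * h = pl) :
    (1 - h * d) * (1 - pk - pl) * (1 - d * h) = 1 - (d * h + h * d) := by
  calc (1 - h * d) * (1 - pk - pl) * (1 - d * h)
      = 1 - (d * h + h * d) + h * (d * d) * h - (pk - h * d * pk) * (1 - d * h)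
          - (1 - h * d) * (pl - pl * d * h) := by noncomm_ring
    _ = 1 - (d * h + h * d) := by rw [hd, hk, hl]; noncomm_ring

section Cancellation

variable (b : Module.Basis I R C) (k l : I)

theorem cancelH_apply (x : C) : cancelH b k l x = b.repr x l • b k := rfl

theorem cancelPi_apply (x : C) (i : cancelSet k l) : cancelPi b k l x i = b.repr x i := rfl

theorem cancelIota_single (i : cancelSet k l) (r : R) :
    cancelIota b k l (single i r) = r • b i := by
  simp [cancelIota]

theorem cancelH_cancelH (hkl : k ≠ l) (x : C) : cancelH b k l (cancelH b k l x) = 0 := by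
  simp [cancelH_apply, hkl]

theorem cancelH_cancelIota (x : cancelSet k l →₀ R) : cancelH b k l (cancelIota b k l x) = 0 := by
  induction x using induction_linear with
  | zero => simp
  | add x y hx hy => simp [hx, hy]
  | single i r => simp [cancelIota_single, cancelH_apply, i.2.2]

theorem cancelPi_cancelH (x : C) : cancelPi b k l (cancelH b k l x) = 0 := by
  ext i
  simp [cancelPi_apply, cancelH_apply, Ne.symm i.2.1]

theorem cancelPi_basis (i : cancelSet k l) : cancelPi b k l (b i) = single i 1 := by
  ext j
  rw [cancelPi_apply, b.repr_self]
  exact single_apply_left Subtype.val_injective i j 1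

theorem cancelPi_basis_left : cancelPi b k l (b k) = 0 := by
  ext j
  simp [cancelPi_apply, Ne.symm j.2.1]

theorem cancelPi_basis_right : cancelPi b k l (b l) = 0 := by
  ext j
  simp [cancelPi_apply, Ne.symm j.2.2]

theorem cancelPi_cancelIota (x : cancelSet k l →₀ R) : cancelPi b k l (cancelIota b k l x) = x := by
  induction x using induction_linear with
  | zero => simp
  | add x y hx hy => simp [hx, hy]
  | single i r => rw [cancelIota_single, map_smul, cancelPi_basis, smul_single_one]

theorem cancelIota_comp_cancelPi (hkl : k ≠ l) :
    cancelIota b k l ∘ₗ cancelPi b k l =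
      1 - (b.coord k).smulRight (b k) - (b.coord l).smulRight (b l) := by
  refine b.ext fun i => ?_
  by_cases hik : i = k
  · subst hik
    simp [cancelPi_basis_left, hkl]
  by_cases hil : i = l
  · subst hil
    simp [cancelPi_basis_right, hkl]
  simp [cancelPi_basis b k l ⟨i, hik, hil⟩, cancelIota_single, hik, hil]

variable {k l} {d : C →ₗ[R] C} (hdkl : b.repr (d (b k)) l = 1)
include hdkl

theorem cancelH_comp_comp_smulRight_coord_self :
    cancelH b k l ∘ₗ d ∘ₗ (b.coord k).smulRight (b k) = (b.coord k).smulRight (b k) := by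
  ext x
  simp [cancelH_apply, hdkl]

theorem smulRight_coord_self_comp_comp_cancelH :
    (b.coord l).smulRight (b l) ∘ₗ d ∘ₗ cancelH b k l = (b.coord l).smulRight (b l) := by
  ext x
  simp [cancelH_apply, hdkl]

end Cancellation

/-- cancellation lemma, homotopy equivalence part:
`f ∘ g = id` on `C'`, and `id_C - g ∘ f = d ∘ h + h ∘ d`, so `(C, d)` and
`(C', d')` are chain homotopy equivalent via the homotopy `h`. -/
theorem cancellation_homotopy_equivalence (b : Module.Basis I R C) (d : C →ₗ[R] C)
    (hd : d ∘ₗ d = 0) (k l : I) (hkl : k ≠ l) (hdkl : b.repr (d (b k)) l = 1) :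
    (cancelF b k l d) ∘ₗ (cancelG b k l d) = LinearMap.id ∧
    LinearMap.id - (cancelG b k l d) ∘ₗ (cancelF b k l d) =
      d ∘ₗ (cancelH b k l) + (cancelH b k l) ∘ₗ d := by
  refine ⟨LinearMap.ext fun x => ?_, ?_⟩
  · simp [cancelF, cancelG, cancelH_cancelIota, cancelH_cancelH b k l hkl, cancelPi_cancelH,
      cancelPi_cancelIota]
  · have key := one_sub_mul_one_sub_sub_mul_one_sub (h := cancelH b k l)
      (pk := (b.coord k).smulRight (b k)) (pl := (b.coord l).smulRight (b l)) hd
      (cancelH_comp_comp_smulRight_coord_self b hdkl)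
      (smulRight_coord_self_comp_comp_cancelH b hdkl)
    have hgf : cancelG b k l d ∘ₗ cancelF b k l d =
        (1 - cancelH b k l * d) * (cancelIota b k l ∘ₗ cancelPi b k l) * (1 - d * cancelH b k l) :=
      rfl
    rw [hgf, cancelIota_comp_cancelPi b k l hkl, key]
    exact sub_sub_cancel _ _
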